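/- A topological space (X, τ) is a normal T₁ space (i.e., T₄) if and only if X is T₁ and for every pair of disjoint closed subsets A, B ⊆ X one has cl_{βX_d}(A^*) ∩ cl_{βX_d}(B^*) = ∅, where the closures are taken in the ultrafilter space βX_d. (Theorem 4.4(6)) -/

import Mathlib

/-!
If `X` is normal, disjoint closed sets `A`, `B` have disjoint closed neighbourhoods `C`, `D`;
every ultrafilter near `A` contains `C`, so `cl (A^*)` lies in the clopen set `Ĉ`, and likewise
`cl (B^*) ⊆ D̂`, which is disjoint from `Ĉ`. Conversely, if `A` and `B` cannot be separated, the
filter `𝓝ˢ A ⊓ 𝓝ˢ B` is proper, and any ultrafilter finer than it lies in `A^* ∩ B^*`.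
-/

/-- `near x` is `x^*`: the set of ultrafilters `p` on `X` (points of `βX_d`)
such that `x ∈ cl_X A` for every `A ∈ p`, i.e. the ultrafilters near to `x`. -/
def near {X : Type*} [TopologicalSpace X] (x : X) : Set (Ultrafilter X) :=
  {p | ∀ A ∈ p, x ∈ closure A}

/-- `nearSet F` is `F^*`: the set of ultrafilters `p` on `X` such that
`cl_X A` meets `F` for every `A ∈ p`. -/
def nearSet {X : Type*} [TopologicalSpace X] (F : Set X) : Set (Ultrafilter X) :=
  {p | ∀ A ∈ p, (closure A ∩ F).Nonempty}

open Filter Topology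

section

variable {X : Type*} [TopologicalSpace X]

lemma closure_nearSet_subset {A U : Set X} (hU : U ∈ 𝓝ˢ A) :
    closure (nearSet A) ⊆ {p : Ultrafilter X | closure U ∈ p} := by
  refine closure_minimal (fun p hp => ?_) (ultrafilter_isClosed_basic _)
  by_contra hUp
  obtain ⟨x, hx, hxA⟩ := hp _ (Ultrafilter.compl_mem_iff_notMem.2 hUp)
  rw [closure_compl] at hx
  exact hx (interior_mono subset_closure (subset_interior_iff_mem_nhdsSet.2 hU hxA))

lemma mem_nearSet_of_le_nhdsSet {F : Set X} {p : Ultrafilter X} (hp : ↑p ≤ 𝓝ˢ F) :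
    p ∈ nearSet F := by
  intro S hS
  by_contra hSF
  have hdisj : Disjoint (𝓟 S) (𝓝ˢ F) :=
    disjoint_principal_nhdsSet.2 <|
      Set.disjoint_iff_inter_eq_empty.2 (Set.not_nonempty_iff_eq_empty.1 hSF)
  exact p.neBot.ne (disjoint_self.1 (hdisj.mono (le_principal_iff.2 hS) hp))

lemma closure_nearSet_inter_closure_nearSet_eq_empty [NormalSpace X] {A B : Set X}
    (hA : IsClosed A) (hB : IsClosed B) (hAB : Disjoint A B) :
    closure (nearSet A) ∩ closure (nearSet B) = ∅ := by
  obtain ⟨C, ⟨hC, hCc⟩, D, ⟨hD, hDc⟩, hCD⟩ :=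
    ((closed_nhdsSet_basis A hA).disjoint_iff (closed_nhdsSet_basis B hB)).1
      (disjoint_nhdsSet_nhdsSet hA hB hAB)
  refine Set.eq_empty_of_forall_notMem fun p ⟨hpA, hpB⟩ => p.empty_notMem ?_
  have hCp : C ∈ p := hCc.closure_eq ▸ closure_nearSet_subset hC hpA
  have hDp : D ∈ p := hDc.closure_eq ▸ closure_nearSet_subset hD hpB
  exact hCD.inter_eq ▸ p.inter_mem hCp hDp

lemma disjoint_nhdsSet_of_closure_nearSet_inter_eq_empty {A B : Set X}
    (h : closure (nearSet A) ∩ closure (nearSet B) = ∅) : Disjoint (𝓝ˢ A) (𝓝ˢ B) := by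
  by_contra hAB
  have : NeBot (𝓝ˢ A ⊓ 𝓝ˢ B) := ⟨disjoint_iff.not.1 hAB⟩
  have hp := Ultrafilter.of_le (𝓝ˢ A ⊓ 𝓝ˢ B)
  have hpA := mem_nearSet_of_le_nhdsSet (hp.trans inf_le_left)
  have hpB := mem_nearSet_of_le_nhdsSet (hp.trans inf_le_right)
  exact Set.eq_empty_iff_forall_notMem.1 h _ ⟨subset_closure hpA, subset_closure hpB⟩

end

theorem stmt19 {X : Type*} [TopologicalSpace X] :
    T4Space X ↔ T1Space X ∧
      ∀ A B : Set X, IsClosed A → IsClosed B → Disjoint A B →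
        closure (nearSet A) ∩ closure (nearSet B) = ∅ := by
  constructor
  · intro _
    exact ⟨inferInstance, fun _ _ hA hB hAB =>
      closure_nearSet_inter_closure_nearSet_eq_empty hA hB hAB⟩
  · rintro ⟨_, h⟩
    have : NormalSpace X := ⟨fun A B hA hB hAB => separatedNhds_iff_disjoint.2
      (disjoint_nhdsSet_of_closure_nearSet_inter_eq_empty (h A B hA hB hAB))⟩
    infer_instance
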